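/- In the basic closed-loop supervisory control framework, if supervisors S₁, S₂, S_k achieve L_m(S₁/[G₁∥(S_k/G_k)]) ∥ L_m(S₂/[G₂∥(S_k/G_k)]) = K, where K and \overline{K} are conditionally decomposable, then the corresponding closed languages satisfy L(S₁/[G₁∥(S_k/G_k)]) ∥ L(S₂/[G₂∥(S_k/G_k)]) = \overline{K}, under the assumptions that each closed-loop system is nonblocking (\overline{L_m(S_i/·)} = L(S_i/·)) and L_m(S_i/[G_i∥(S_k/G_k)]) ⊆ P_{i+k}(K). Abstractly: if M₁ ⊆ (E₁∪E_k)* and M₂ ⊆ (E₂∪E_k)* satisfy M₁ ∥ M₂ = K, M_i ⊆ P_{i+k}(K), and N_i = \overline{M_i}, then N₁ ∥ N₂ = \overline{K}, provided \overline{K} = \overline{P_{1+k}(K)} ∥ \overline{P_{2+k}(K)}. -/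

import Mathlib

/-!
The closure of a synchronous product is always contained in the product of the closures.
Conversely, `Mᵢ ⊆ P_{i+k}(K)` and monotonicity of closure and product put the product of the
closures inside `closure(P_{1+k} K) ∥ closure(P_{2+k} K)`, which is `closure K` by conditional
decomposability of the closure.
-/

open scoped Classical

/-- Natural projection: erase letters not in `A`. -/
noncomputable def proj {Ev : Type*} (A : Set Ev) (w : List Ev) : List Ev :=
  w.filter (fun a => decide (a ∈ A))

/-- Projection of a language. -/
noncomputable def projL {Ev : Type*} (A : Set Ev) (L : Set (List Ev)) : Set (List Ev) :=
  proj A '' L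

/-- Words over an alphabet `A`, i.e., `A*`. -/
def star {Ev : Type*} (A : Set Ev) : Set (List Ev) := {w | ∀ a ∈ w, a ∈ A}

/-- Synchronous product of `L₁ ⊆ A*` and `L₂ ⊆ B*`. -/
noncomputable def sync {Ev : Type*} (A B : Set Ev) (L1 L2 : Set (List Ev)) :
    Set (List Ev) :=
  {w | w ∈ star (A ∪ B) ∧ proj A w ∈ L1 ∧ proj B w ∈ L2}

/-- Prefix closure of a language. -/
def prefixCl {Ev : Type*} (L : Set (List Ev)) : Set (List Ev) := {w | ∃ v, w ++ v ∈ L}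

/-- Controllability of `K` with respect to (prefix-closed) `L` and uncontrollable events `Eu`. -/
def controllable {Ev : Type*} (K L : Set (List Ev)) (Eu : Set Ev) : Prop :=
  ∀ s ∈ prefixCl K, ∀ u ∈ Eu, s ++ [u] ∈ L → s ++ [u] ∈ prefixCl K

/-- Supremal controllable sublanguage of `K` w.r.t. `N` and `U`. -/
noncomputable def supC {Ev : Type*} (K N : Set (List Ev)) (U : Set Ev) : Set (List Ev) :=
  ⋃₀ {M | M ⊆ K ∧ controllable M N U}

/-- `proj A` is an `L`-observer. -/
def observer {Ev : Type*} (A : Set Ev) (L : Set (List Ev)) : Prop :=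
  ∀ t ∈ projL A L, ∀ s ∈ prefixCl L, proj A s <+: t →
    ∃ u, s ++ u ∈ L ∧ proj A (s ++ u) = t

/-- `proj A` is locally control consistent (LCC) for `L` (w.r.t. uncontrollable events `Eu`). -/
def lcc {Ev : Type*} (A Eu : Set Ev) (L : Set (List Ev)) : Prop :=
  ∀ s ∈ L, ∀ σ ∈ A ∩ Eu, proj A s ++ [σ] ∈ projL A L →
    (∃ u, (∀ a ∈ u, a ∉ A) ∧ s ++ u ++ [σ] ∈ L) →
    ∃ u, (∀ a ∈ u, a ∈ Eu ∧ a ∉ A) ∧ s ++ u ++ [σ] ∈ L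

theorem proj_append {Ev : Type*} (A : Set Ev) (u v : List Ev) :
    proj A (u ++ v) = proj A u ++ proj A v :=
  List.filter_append ..

theorem prefixCl_mono {Ev : Type*} {L L' : Set (List Ev)} (h : L ⊆ L') :
    prefixCl L ⊆ prefixCl L' :=
  fun _ ⟨v, hv⟩ => ⟨v, h hv⟩

theorem sync_mono {Ev : Type*} {A B : Set Ev} {L1 L1' L2 L2' : Set (List Ev)}
    (h1 : L1 ⊆ L1') (h2 : L2 ⊆ L2') : sync A B L1 L2 ⊆ sync A B L1' L2' :=
  fun _ ⟨hw, hw1, hw2⟩ => ⟨hw, h1 hw1, h2 hw2⟩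

theorem prefixCl_sync_subset {Ev : Type*} (A B : Set Ev) (L1 L2 : Set (List Ev)) :
    prefixCl (sync A B L1 L2) ⊆ sync A B (prefixCl L1) (prefixCl L2) := by
  rintro w ⟨v, hwv, hv1, hv2⟩
  rw [proj_append] at hv1 hv2
  exact ⟨fun a ha => hwv a (List.mem_append_left v ha), ⟨_, hv1⟩, ⟨_, hv2⟩⟩

theorem stmt15_general {Ev : Type*} (E1 E2 Ek : Set Ev) (K M1 M2 : Set (List Ev))
    (hcdbar : prefixCl K =
      sync (E1 ∪ Ek) (E2 ∪ Ek) (prefixCl (projL (E1 ∪ Ek) K)) (prefixCl (projL (E2 ∪ Ek) K)))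
    (hach : sync (E1 ∪ Ek) (E2 ∪ Ek) M1 M2 = K)
    (hi1 : M1 ⊆ projL (E1 ∪ Ek) K) (hi2 : M2 ⊆ projL (E2 ∪ Ek) K) :
    sync (E1 ∪ Ek) (E2 ∪ Ek) (prefixCl M1) (prefixCl M2) = prefixCl K := by
  apply Set.Subset.antisymm
  · rw [hcdbar]
    exact sync_mono (prefixCl_mono hi1) (prefixCl_mono hi2)
  · rw [← hach]
    exact prefixCl_sync_subset _ _ M1 M2

/-- if the marked closed-loop languages M1, M2 achieve M1 || M2 = K with
Mi included in the projections of K, then the closed languages achieve the prefix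
closure of K. -/
theorem stmt15 {Ev : Type*} (E1 E2 Ek : Set Ev) (K M1 M2 : Set (List Ev))
    (hK : K ⊆ star (E1 ∪ E2 ∪ Ek))
    (hM1 : M1 ⊆ star (E1 ∪ Ek)) (hM2 : M2 ⊆ star (E2 ∪ Ek))
    (hcd : K = sync (E1 ∪ Ek) (E2 ∪ Ek) (projL (E1 ∪ Ek) K) (projL (E2 ∪ Ek) K))
    (hcdbar : prefixCl K =
      sync (E1 ∪ Ek) (E2 ∪ Ek) (prefixCl (projL (E1 ∪ Ek) K)) (prefixCl (projL (E2 ∪ Ek) K)))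
    (hach : sync (E1 ∪ Ek) (E2 ∪ Ek) M1 M2 = K)
    (hi1 : M1 ⊆ projL (E1 ∪ Ek) K) (hi2 : M2 ⊆ projL (E2 ∪ Ek) K) :
    sync (E1 ∪ Ek) (E2 ∪ Ek) (prefixCl M1) (prefixCl M2) = prefixCl K :=
  stmt15_general E1 E2 Ek K M1 M2 hcdbar hach hi1 hi2
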